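/- Let h : ℝ^m → ℝ be proper, lsc, and convex, and suppose sequences z^ν → z̄ ∈ dom h, y^ν ∈ ℝ^m with ‖y^ν‖ → ∞, c^ν → 0, and y^ν + c^ν ∈ ∂h(z^ν) for all ν. If v^ν = y^ν/‖y^ν‖ → v̄ along a subsequence, then v̄ ∈ N_{dom h}(z̄), the normal cone to the domain of h at z̄. -/

import Mathlib

open Filter Topology

/-!
Dividing the subgradient inequality `h zᵥ + ⟪wᵥ, z' - zᵥ⟫ ≤ h z'` by the blowing-up norm of
`wᵥ` leaves `⟪wᵥ / ‖wᵥ‖, z' - zᵥ⟫ ≤ (h z' - h zᵥ) / ‖wᵥ‖`. Lower semicontinuity bounds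
`h zᵥ` from below near `z̄`, so the right side tends to `0` and the left side to `⟪v̄, z' - z̄⟫`.
-/

theorem inner_sub_nonpos_of_tendsto_smul_subgradient {E ι : Type*} [NormedAddCommGroup E]
    [InnerProductSpace ℝ E] {l : Filter ι} [l.NeBot] {D : Set E} {h : E → ℝ} {zbar v z' : E}
    {z w : ι → E} {t : ι → ℝ}
    (hlsc : LowerSemicontinuousWithinAt h D zbar) (hz : Tendsto z l (𝓝[D] zbar))
    (ht : Tendsto t l (𝓝 0)) (ht_nonneg : ∀ᶠ i in l, 0 ≤ t i)
    (htw : Tendsto (fun i => t i • w i) l (𝓝 v))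
    (hsub : ∀ᶠ i in l, ∀ x ∈ D, h (z i) + inner ℝ (w i) (x - z i) ≤ h x) (hz' : z' ∈ D) :
    inner ℝ v (z' - zbar) ≤ 0 := by
  have hlim : Tendsto (fun i => inner ℝ (t i • w i) (z' - z i)) l (𝓝 (inner ℝ v (z' - zbar))) :=
    htw.inner (tendsto_const_nhds.sub (tendsto_nhds_of_tendsto_nhdsWithin hz))
  have hbound : Tendsto (fun i => t i * (h z' - h zbar + 1)) l (𝓝 0) := by
    simpa using ht.mul_const (h z' - h zbar + 1)
  have hlower : ∀ᶠ i in l, h zbar - 1 < h (z i) := hz.eventually (hlsc _ (by linarith))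
  refine le_of_tendsto_of_tendsto hlim hbound ?_
  filter_upwards [ht_nonneg, hsub, hlower] with i hti hsubi hloweri
  rw [real_inner_smul_left]
  exact mul_le_mul_of_nonneg_left (by linarith [hsubi z' hz']) hti

theorem stmt9_general (m : ℕ) (D : Set (EuclideanSpace ℝ (Fin m)))
    (h : EuclideanSpace ℝ (Fin m) → ℝ)
    (hlsc : LowerSemicontinuousOn h D)
    (z : ℕ → EuclideanSpace ℝ (Fin m)) (zbar : EuclideanSpace ℝ (Fin m))
    (hzD : ∀ ν, z ν ∈ D) (hzbarD : zbar ∈ D)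
    (hzconv : Tendsto z atTop (nhds zbar))
    (y c : ℕ → EuclideanSpace ℝ (Fin m))
    (hynorm : Tendsto (fun ν => ‖y ν‖) atTop atTop)
    (hc : Tendsto c atTop (nhds 0))
    (hsub : ∀ ν, ∀ z' ∈ D, h (z ν) + (inner ℝ (y ν + c ν) (z' - z ν) : ℝ) ≤ h z')
    (φ : ℕ → ℕ) (hφ : StrictMono φ)
    (vbar : EuclideanSpace ℝ (Fin m))
    (hv : Tendsto (fun ν => (‖y (φ ν)‖)⁻¹ • y (φ ν)) atTop (nhds vbar)) :
    ∀ z' ∈ D, (inner ℝ vbar (z' - zbar) : ℝ) ≤ 0 := by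
  intro z' hz'
  have hφ_top := hφ.tendsto_atTop
  have hinv : Tendsto (fun ν => (‖y (φ ν)‖)⁻¹) atTop (𝓝 0) :=
    tendsto_inv_atTop_zero.comp (hynorm.comp hφ_top)
  have hzφ : Tendsto (fun ν => z (φ ν)) atTop (𝓝[D] zbar) :=
    tendsto_nhdsWithin_iff.2 ⟨hzconv.comp hφ_top, .of_forall fun ν => hzD (φ ν)⟩
  have hdir : Tendsto (fun ν => (‖y (φ ν)‖)⁻¹ • (y (φ ν) + c (φ ν))) atTop (𝓝 vbar) := by
    simpa [smul_add] using hv.add (hinv.smul (hc.comp hφ_top))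
  exact inner_sub_nonpos_of_tendsto_smul_subgradient (hlsc zbar hzbarD) hzφ hinv
    (.of_forall fun _ => by positivity) hdir (.of_forall fun ν => hsub (φ ν)) hz'

/-- The proper, lsc, convex extended-real function `h` is encoded by its (nonempty,
convex) domain `D` together with its real values on `D`, lower semicontinuity on `D`,
and convexity on `D`. Subgradients and the normal cone are taken relative to `D`. -/
theorem stmt9 (m : ℕ) (D : Set (EuclideanSpace ℝ (Fin m)))
    (hD : D.Nonempty) (hDconv : Convex ℝ D)
    (h : EuclideanSpace ℝ (Fin m) → ℝ)
    (hconv : ConvexOn ℝ D h)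
    (hlsc : LowerSemicontinuousOn h D)
    (z : ℕ → EuclideanSpace ℝ (Fin m)) (zbar : EuclideanSpace ℝ (Fin m))
    (hzD : ∀ ν, z ν ∈ D) (hzbarD : zbar ∈ D)
    (hzconv : Tendsto z atTop (nhds zbar))
    (y c : ℕ → EuclideanSpace ℝ (Fin m))
    (hynorm : Tendsto (fun ν => ‖y ν‖) atTop atTop)
    (hc : Tendsto c atTop (nhds 0))
    (hsub : ∀ ν, ∀ z' ∈ D, h (z ν) + (inner ℝ (y ν + c ν) (z' - z ν) : ℝ) ≤ h z')
    (φ : ℕ → ℕ) (hφ : StrictMono φ)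
    (vbar : EuclideanSpace ℝ (Fin m))
    (hv : Tendsto (fun ν => (‖y (φ ν)‖)⁻¹ • y (φ ν)) atTop (nhds vbar)) :
    ∀ z' ∈ D, (inner ℝ vbar (z' - zbar) : ℝ) ≤ 0 :=
  stmt9_general m D h hlsc z zbar hzD hzbarD hzconv y c hynorm hc hsub φ hφ vbar hv
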